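/- arXiv:1806.07643 — 2 statements merged into one kernel-verified Lean document; each statement's English description precedes it below -/
import Mathlib

section
/- Let P and Q be polytopes in ℝ^d. Suppose u and v are adjacent vertices of P + Q with Minkowski decompositions u = u_P + u_Q and v = v_P + v_Q, where u_P, v_P are vertices of P and u_Q, v_Q are vertices of Q. Then u_P and v_P are either adjacent vertices of P or they coincide, and likewise u_Q and v_Q are either adjacent vertices of Q or they coincide. -/
open Pointwise
open scoped RealInnerProductSpace

noncomputable section

abbrev Esp (d : ℕ) := EuclideanSpace ℝ (Fin d)

def IsPolytope {d : ℕ} (P : Set (Esp d)) : Prop :=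
  ∃ s : Finset (Esp d), s.Nonempty ∧ P = convexHull ℝ (s : Set (Esp d))

def polyFace {d : ℕ} (P : Set (Esp d)) (c : Esp d) : Set (Esp d) :=
  {x | x ∈ P ∧ ∀ y ∈ P, ⟪c, x⟫ ≤ ⟪c, y⟫}

def polyVerts {d : ℕ} (P : Set (Esp d)) : Set (Esp d) :=
  Set.extremePoints ℝ P

def f0 {d : ℕ} (P : Set (Esp d)) : ℕ := (polyVerts P).ncard

def polyAdj {d : ℕ} (P : Set (Esp d)) (u v : Esp d) : Prop :=
  u ≠ v ∧ u ∈ polyVerts P ∧ v ∈ polyVerts P ∧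
    ∃ c : Esp d, polyFace P c = segment ℝ u v

def polyGraph {d : ℕ} (P : Set (Esp d)) : SimpleGraph (Esp d) where
  Adj u v := polyAdj P u v
  symm := by
    constructor
    rintro u v ⟨hne, hu, hv, c, hc⟩
    exact ⟨hne.symm, hv, hu, c, by rw [hc, segment_symm]⟩
  loopless := by constructor; rintro u ⟨hne, -⟩; exact hne rfl

def polyDiam {d : ℕ} (P : Set (Esp d)) : ℕ :=
  sSup {n : ℕ | ∃ u ∈ polyVerts P, ∃ v ∈ polyVerts P, n = (polyGraph P).dist u v}

def polyDim {d : ℕ} (P : Set (Esp d)) : ℕ :=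
  Module.finrank ℝ (affineSpan ℝ P).direction

def IsFace {d : ℕ} (P F : Set (Esp d)) : Prop := ∃ c : Esp d, polyFace P c = F

def gammaVerts {d : ℕ} (P Q : Set (Esp d)) (u : Esp d) : Set (Esp d) :=
  {w ∈ polyVerts (P + Q) | ∃ v ∈ polyVerts Q, w = u + v}

/-!
A face of `P + Q` in direction `c` is the sum of the faces of `P` and `Q` in direction `c`, and
the decomposition of a point of `P + Q` puts its summands in those faces. So if the face is the
edge `[uP + uQ, vP + vQ]`, every `x` in the face of `P` has both `x + uQ` and `x + vQ` on that
edge; comparing the two positions on the edge forces `x ∈ [uP, vP]`. Conversely, the face of a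
convex set is convex, so it contains `[uP, vP]`.
-/

theorem mem_segment_of_add_mem_segment {𝕜 E : Type*} [Field 𝕜] [LinearOrder 𝕜]
    [IsStrictOrderedRing 𝕜] [AddCommGroup E] [Module 𝕜 E] {x a b a' b' : E}
    (ha : x + a' ∈ segment 𝕜 (a + a') (b + b')) (hb : x + b' ∈ segment 𝕜 (a + a') (b + b')) :
    x ∈ segment 𝕜 a b := by
  rw [segment_eq_image'] at ha hb ⊢
  obtain ⟨s, ⟨hs0, -⟩, hs⟩ := ha
  obtain ⟨t, ⟨-, ht1⟩, ht⟩ := hb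
  have hx : x = a + s • (b + b' - (a + a')) := by linear_combination (norm := module) -hs
  -- subtracting the two positions isolates `b' - a'`, hence `b - a`, as a multiple of the edge
  have hba : b - a = (1 - t + s) • (b + b' - (a + a')) := by
    linear_combination (norm := module) ht - hs
  rcases (show (0 : 𝕜) ≤ 1 - t + s by linarith).eq_or_lt with hl | hl
  · refine ⟨0, ⟨le_rfl, zero_le_one⟩, ?_⟩
    show a + (0 : 𝕜) • (b - a) = x
    rw [hx, show s = 0 by linarith, zero_smul, zero_smul]
  · refine ⟨s / (1 - t + s), ⟨div_nonneg hs0 hl.le, (div_le_one hl).2 (by linarith)⟩, ?_⟩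
    show a + (s / (1 - t + s)) • (b - a) = x
    rw [hba, smul_smul, div_mul_cancel₀ s hl.ne', hx]

section Faces

variable {d : ℕ}

theorem IsPolytope.convex {P : Set (Esp d)} (hP : IsPolytope P) : Convex ℝ P := by
  obtain ⟨s, -, rfl⟩ := hP
  exact convex_convexHull ℝ _

theorem convex_polyFace {P : Set (Esp d)} (hP : Convex ℝ P) (c : Esp d) :
    Convex ℝ (polyFace P c) := by
  intro x hx y hy a b ha hb hab
  refine ⟨hP hx.1 hy.1 ha hb hab, fun z hz => ?_⟩
  rw [inner_add_right, real_inner_smul_right, real_inner_smul_right]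
  calc a * ⟪c, x⟫ + b * ⟪c, y⟫ ≤ a * ⟪c, z⟫ + b * ⟪c, z⟫ := by
        gcongr
        exacts [hx.2 z hz, hy.2 z hz]
    _ = ⟪c, z⟫ := by rw [← add_mul, hab, one_mul]

theorem add_mem_polyFace_add_iff {P Q : Set (Esp d)} {x y : Esp d} (hx : x ∈ P) (hy : y ∈ Q)
    (c : Esp d) :
    x + y ∈ polyFace (P + Q) c ↔ x ∈ polyFace P c ∧ y ∈ polyFace Q c := by
  constructor
  · intro h
    refine ⟨⟨hx, fun p hp => ?_⟩, ⟨hy, fun q hq => ?_⟩⟩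
    · have := h.2 (p + y) (Set.add_mem_add hp hy)
      rw [inner_add_right, inner_add_right] at this
      linarith
    · have := h.2 (x + q) (Set.add_mem_add hx hq)
      rw [inner_add_right, inner_add_right] at this
      linarith
  · rintro ⟨hxF, hyF⟩
    refine ⟨Set.add_mem_add hx hy, ?_⟩
    rintro _ ⟨p, hp, q, hq, rfl⟩
    rw [inner_add_right, inner_add_right]
    exact add_le_add (hxF.2 p hp) (hyF.2 q hq)

theorem polyAdj_or_eq_of_polyAdj_add {P Q : Set (Esp d)} (hP : Convex ℝ P)
    {uP uQ vP vQ : Esp d} (huv : polyAdj (P + Q) (uP + uQ) (vP + vQ))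
    (huP : uP ∈ polyVerts P) (huQ : uQ ∈ Q) (hvP : vP ∈ polyVerts P) (hvQ : vQ ∈ Q) :
    polyAdj P uP vP ∨ uP = vP := by
  refine or_iff_not_imp_right.2 fun hne => ⟨hne, huP, hvP, ?_⟩
  obtain ⟨-, -, -, c, hc⟩ := huv
  obtain ⟨huPF, huQF⟩ := (add_mem_polyFace_add_iff huP.1 huQ c).1 (hc ▸ left_mem_segment ℝ _ _)
  obtain ⟨hvPF, hvQF⟩ := (add_mem_polyFace_add_iff hvP.1 hvQ c).1 (hc ▸ right_mem_segment ℝ _ _)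
  refine ⟨c, Set.Subset.antisymm (fun x hx => ?_) ((convex_polyFace hP c).segment_subset huPF hvPF)⟩
  have hxu := (add_mem_polyFace_add_iff hx.1 huQ c).2 ⟨hx, huQF⟩
  have hxv := (add_mem_polyFace_add_iff hx.1 hvQ c).2 ⟨hx, hvQF⟩
  rw [hc] at hxu hxv
  exact mem_segment_of_add_mem_segment hxu hxv

end Faces

theorem stmt10 {d : ℕ} (P Q : Set (Esp d)) (hP : IsPolytope P) (hQ : IsPolytope Q)
    (u v uP uQ vP vQ : Esp d)
    (huv : polyAdj (P + Q) u v)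
    (huP : uP ∈ polyVerts P) (huQ : uQ ∈ polyVerts Q) (hu : u = uP + uQ)
    (hvP : vP ∈ polyVerts P) (hvQ : vQ ∈ polyVerts Q) (hv : v = vP + vQ) :
    (polyAdj P uP vP ∨ uP = vP) ∧ (polyAdj Q uQ vQ ∨ uQ = vQ) := by
  subst hu hv
  refine ⟨polyAdj_or_eq_of_polyAdj_add hP.convex huv huP huQ.1 hvP hvQ.1, ?_⟩
  rw [add_comm P, add_comm uP, add_comm vP] at huv
  exact polyAdj_or_eq_of_polyAdj_add hQ.convex huv huQ huP.1 hvQ hvP.1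
end
end

section
/- Let P and Q be polytopes in ℝ^d. There exists an injection φ from the vertex set of P into the vertex set of P + Q such that for every vertex u of P, one has φ(u) = u + v for some vertex v of Q. -/
/-!
A vertex `u` of a polytope `P` is exposed: some linear functional `l` attains its maximum on `P`
only at `u`. The face of `Q` on which `l` is maximal is nonempty and compact, so by Krein–Milman it
has an extreme point `v`, which is a vertex of `Q`. The face of `P + Q` maximizing `l` is
`{u} + (that face)`, hence `u + v` is a vertex of `P + Q`. The map `u ↦ u + v` is injective because
a vertex of `P + Q` has only one decomposition `p + q` with `p ∈ P` and `q ∈ Q`.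
-/

open Pointwise
open scoped RealInnerProductSpace

noncomputable section

open Set

section Algebraic

variable {E : Type*} [AddCommGroup E] [Module ℝ E]

theorem add_mem_extremePoints_singleton_add {B : Set E} {v : E} (u : E)
    (hv : v ∈ B.extremePoints ℝ) : u + v ∈ ({u} + B).extremePoints ℝ := by
  rw [singleton_add]
  refine ⟨mem_image_of_mem _ hv.1, ?_⟩
  rintro _ ⟨q₁, hq₁, rfl⟩ _ ⟨q₂, hq₂, rfl⟩ hseg
  rw [hv.2 hq₁ hq₂ ((mem_openSegment_translate ℝ u).1 hseg)]

theorem eq_of_add_eq_add_of_add_mem_extremePoints {P Q : Set E} {p q p' q' : E}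
    (hw : p + q ∈ (P + Q).extremePoints ℝ) (hp : p ∈ P) (hq : q ∈ Q) (hp' : p' ∈ P)
    (hq' : q' ∈ Q) (h : p + q = p' + q') : p = p' := by
  have hmid : p + q ∈ openSegment ℝ (p + q') (p' + q) := by
    refine ⟨1 / 2, 1 / 2, by norm_num, by norm_num, by norm_num, ?_⟩
    calc (1 / 2 : ℝ) • (p + q') + (1 / 2 : ℝ) • (p' + q)
        = (1 / 2 : ℝ) • ((p + q) + (p' + q')) := by module
      _ = p + q := by rw [← h]; module
  have hq' : q' = q := add_left_cancel (hw.2 (add_mem_add hp hq') (add_mem_add hp' hq) hmid)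
  rw [hq'] at h
  exact add_right_cancel h

theorem convex_insert_setOf_lt (l : E →ₗ[ℝ] ℝ) (u : E) :
    Convex ℝ (insert u {y | l y < l u}) := by
  have hS : ∀ z ∈ insert u {y | l y < l u}, l z ≤ l u ∧ (l u ≤ l z → z = u) := by
    rintro z (rfl | hz)
    · exact ⟨le_rfl, fun _ => rfl⟩
    · exact ⟨hz.le, fun h => absurd hz h.not_gt⟩
  refine convex_iff_forall_pos.2 fun x hx y hy a b ha hb hab => ?_
  by_cases hlt : l (a • x + b • y) < l u
  · exact .inr hlt
  have hcombo : l (a • x + b • y) = a * l x + b * l y := by simp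
  rw [not_lt, hcombo] at hlt
  obtain ⟨hx₁, hx₂⟩ := hS x hx
  obtain ⟨hy₁, hy₂⟩ := hS y hy
  have hsum : a * (l u - l x) + b * (l u - l y) ≤ 0 := by linear_combination hlt + l u * hab
  have hx₃ : 0 ≤ a * (l u - l x) := mul_nonneg ha.le (sub_nonneg.2 hx₁)
  have hy₃ : 0 ≤ b * (l u - l y) := mul_nonneg hb.le (sub_nonneg.2 hy₁)
  rw [hx₂ (by nlinarith), hy₂ (by nlinarith)]
  exact .inl (Convex.combo_self hab u)

end Algebraic

section Topological

variable {E : Type*} [AddCommGroup E] [Module ℝ E] [TopologicalSpace E]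

theorem ContinuousLinearMap.toExposed_add (l : StrongDual ℝ E) (P Q : Set E) :
    l.toExposed (P + Q) = l.toExposed P + l.toExposed Q := by
  ext x
  constructor
  · rintro ⟨⟨p, hp, q, hq, rfl⟩, hmax⟩
    refine ⟨p, ⟨hp, fun p' hp' => ?_⟩, q, ⟨hq, fun q' hq' => ?_⟩, rfl⟩
    · simpa using hmax _ (add_mem_add hp' hq)
    · simpa using hmax _ (add_mem_add hp hq')
  · rintro ⟨p, ⟨hp, hpmax⟩, q, ⟨hq, hqmax⟩, rfl⟩
    refine ⟨add_mem_add hp hq, ?_⟩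
    rintro _ ⟨p', hp', q', hq', rfl⟩
    simpa using add_le_add (hpmax p' hp') (hqmax q' hq')

variable [IsTopologicalAddGroup E] [ContinuousSMul ℝ E] [LocallyConvexSpace ℝ E] [T2Space E]

theorem Set.Finite.extremePoints_convexHull_subset_exposedPoints {s : Set E} (hs : s.Finite) :
    (convexHull ℝ s).extremePoints ℝ ⊆ (convexHull ℝ s).exposedPoints ℝ := by
  intro u hu
  have hnot : u ∉ convexHull ℝ (s \ {u}) := fun h =>
    ((convex_convexHull ℝ s).mem_extremePoints_iff_mem_sdiff_convexHull_sdiff.1 hu).2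
      (convexHull_mono (sdiff_subset_sdiff_left (subset_convexHull ℝ s)) h)
  obtain ⟨l, r, hlt, hr⟩ := geometric_hahn_banach_closed_point (convex_convexHull ℝ _)
    (hs.sdiff.isCompact_convexHull ℝ).isClosed hnot
  have hsub : convexHull ℝ s ⊆ insert u {y | l y < l u} := by
    refine convexHull_min (fun y hy => ?_) (convex_insert_setOf_lt l.toLinearMap u)
    by_cases hyu : y = u
    · exact .inl hyu
    · exact .inr ((hlt y (subset_convexHull ℝ _ ⟨hy, hyu⟩)).trans hr)
  refine ⟨hu.1, l, fun y hy => ?_⟩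
  rcases hsub hy with rfl | hyu
  · exact ⟨le_rfl, fun _ => rfl⟩
  · exact ⟨hyu.le, fun hle => absurd hyu hle.not_gt⟩

theorem exists_add_mem_extremePoints_add {P Q : Set E} {u : E} (hu : u ∈ P.exposedPoints ℝ)
    (hQ : IsCompact Q) (hQne : Q.Nonempty) :
    ∃ v ∈ Q.extremePoints ℝ, u + v ∈ (P + Q).extremePoints ℝ := by
  obtain ⟨l, hl⟩ := mem_exposedPoints_iff_exposed_singleton.1 hu ⟨u, rfl⟩
  have hF : IsExposed ℝ Q (l.toExposed Q) := ContinuousLinearMap.toExposed.isExposed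
  obtain ⟨w, hwQ, hw⟩ := hQ.exists_isMaxOn hQne l.continuous.continuousOn
  obtain ⟨v, hv⟩ := (hF.isCompact hQ).extremePoints_nonempty ⟨w, hwQ, isMaxOn_iff.1 hw⟩
  refine ⟨v, hF.isExtreme.extremePoints_subset_extremePoints hv, ?_⟩
  have hPQ : IsExposed ℝ (P + Q) (l.toExposed (P + Q)) := ContinuousLinearMap.toExposed.isExposed
  apply hPQ.isExtreme.extremePoints_subset_extremePoints
  rw [l.toExposed_add, ContinuousLinearMap.toExposed, ← hl]
  exact add_mem_extremePoints_singleton_add u hv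

end Topological

theorem stmt11 {d : ℕ} (P Q : Set (Esp d)) (hP : IsPolytope P) (hQ : IsPolytope Q) :
    ∃ φ : Esp d → Esp d,
      Set.InjOn φ (polyVerts P) ∧
      Set.MapsTo φ (polyVerts P) (polyVerts (P + Q)) ∧
      ∀ u ∈ polyVerts P, ∃ v ∈ polyVerts Q, φ u = u + v := by
  have hPexp : polyVerts P ⊆ P.exposedPoints ℝ := by
    obtain ⟨s, -, rfl⟩ := hP
    exact s.finite_toSet.extremePoints_convexHull_subset_exposedPoints
  obtain ⟨t, ht, rfl⟩ := hQ
  choose! v hvQ hvPQ using fun u (hu : u ∈ polyVerts P) =>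
    exists_add_mem_extremePoints_add (hPexp hu) (t.finite_toSet.isCompact_convexHull ℝ)
      (Finset.coe_nonempty.2 ht).convexHull
  refine ⟨fun u => u + v u, fun u hu u' hu' h => ?_, hvPQ, fun u hu => ⟨v u, hvQ u hu, rfl⟩⟩
  exact eq_of_add_eq_add_of_add_mem_extremePoints (hvPQ u hu) hu.1 (hvQ u hu).1 hu'.1
    (hvQ u' hu').1 h
end
end
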